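/- Let a, b, p, q be positive integers with 1 ≤ n < p, n ≤ q, and b ≤ a ≤ m. Set α = a·φ_n + (p − n)·ψ_a, β = b·φ_n + (q − n)·ψ_b, and δ = a·φ_n + (p − n)·ψ_a + q·ψ_b in ℤ^{n+m}. Then ⟨δ, δ + 2ρ⟩ − ⟨α, α + 2ρ⟩ − ⟨β, β + 2ρ⟩ = −2·b·p·q. -/

import Mathlib

/-! Common definitions: the weight lattice `ℤ^{n+m}` is modeled as functions `ℕ → ℤ`
(only the coordinates `1, …, n+m` are relevant), with standard basis vectors `eps i`.
Index `i` has parity 0 if `i ≤ n` and parity 1 otherwise. -/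

namespace TwoBoundary

/-- The standard basis vector `ε_i` of the weight lattice. -/
def eps (i : ℕ) : ℕ → ℤ := fun k => if k = i then 1 else 0

/-- The sign of the positive root `ε_i − ε_j`: `+1` if it is even
(i.e. the parities of `i` and `j` agree), `−1` if it is odd. -/
def rootSign (n i j : ℕ) : ℤ := if (i ≤ n) = (j ≤ n) then 1 else -1

/-- `2ρ` = (sum of even positive roots) − (sum of odd positive roots). -/
def twoRho (n m : ℕ) : ℕ → ℤ :=
  ∑ i ∈ Finset.Icc 1 (n + m), ∑ j ∈ Finset.Icc 1 (n + m),
    if i < j then rootSign n i j • (eps i - eps j) else 0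

/-- The bilinear form with `⟨ε_i, ε_j⟩ = (−1)^{parity i} δ_{ij}`. -/
def form (n m : ℕ) (μ ν : ℕ → ℤ) : ℤ :=
  ∑ i ∈ Finset.Icc 1 (n + m), (if i ≤ n then (1 : ℤ) else -1) * (μ i * ν i)

/-- `φ_t = ε_1 + ⋯ + ε_t`. -/
def phi (t : ℕ) : ℕ → ℤ := fun k => if 1 ≤ k ∧ k ≤ t then 1 else 0

/-- `ψ_s = ε_{n+1} + ⋯ + ε_{n+s}`. -/
def psi (n s : ℕ) : ℕ → ℤ := fun k => if n + 1 ≤ k ∧ k ≤ n + s then 1 else 0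

/-- A partition, given by its sequence of parts `λ_1 ≥ λ_2 ≥ ⋯` (the index-0 value
is normalized to `0`): weakly decreasing with finitely many nonzero terms. -/
def IsPartition (lam : ℕ → ℕ) : Prop :=
  lam 0 = 0 ∧ (∀ i, 1 ≤ i → lam (i + 1) ≤ lam i) ∧ ∃ N, ∀ i, N ≤ i → lam i = 0

/-- A hook partition (relative to `(n, m)`): a partition with `λ_{n+1} ≤ m`. -/
def IsHookPartition (n m : ℕ) (lam : ℕ → ℕ) : Prop :=
  IsPartition lam ∧ lam (n + 1) ≤ m

/-- The weight `λ̄` associated to a hook partition `λ`: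
`λ̄_i = λ_i` for `1 ≤ i ≤ n`, and `λ̄_{n+j} = #{k > n : λ_k ≥ j}` for `1 ≤ j ≤ m`. -/
noncomputable def barWeight (n m : ℕ) (lam : ℕ → ℕ) : ℕ → ℤ := fun i =>
  if 1 ≤ i ∧ i ≤ n then (lam i : ℤ)
  else if n + 1 ≤ i ∧ i ≤ n + m then ({k : ℕ | n < k ∧ i - n ≤ lam k}.ncard : ℤ)
  else 0

/-- The set `𝒫₀` of partitions occurring in the decomposition of
`L((a^p)) ⊗ L((b^q))` (for `q ≤ p`), by the combinatorial description of
Okada and Stanley. -/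
def InP0 (a b p q : ℕ) (lam : ℕ → ℕ) : Prop :=
  IsPartition lam ∧
  (∀ i, p + q < i → lam i = 0) ∧
  (∀ i, 1 ≤ i → i ≤ q → lam i + lam (p + q + 1 - i) = a + b) ∧
  (∀ i, q + 1 ≤ i → i ≤ p → lam i = a) ∧
  (∀ i, 1 ≤ i → i ≤ q → max a b ≤ lam i)

/-! The form is bilinear, so everything reduces to the pairings of `φ_n`, `ψ_s` and `2ρ`.
Splitting each sum at `n` gives `⟨φ_n, φ_n⟩ = n`, `⟨φ_n, ψ_s⟩ = 0` and `⟨ψ_s, ψ_t⟩ = -min s t`.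
Counting the even and odd positive roots that involve a given index gives
`(2ρ)_i = n - m + 1 - 2i` for `i ≤ n` and `(2ρ)_{n+j} = n + m + 1 - 2j`, hence
`⟨φ_n, 2ρ⟩ = -nm` and `⟨ψ_s, 2ρ⟩ = -s(n + m - s)` by Gauss' sum. The claimed identity is then
a polynomial identity in `n, m, a, b, p, q`. -/

open Finset

lemma form_add_left (n m : ℕ) (μ μ' ν : ℕ → ℤ) :
    form n m (μ + μ') ν = form n m μ ν + form n m μ' ν := by
  simp only [form, Pi.add_apply, add_mul, mul_add, sum_add_distrib]

lemma form_add_right (n m : ℕ) (μ ν ν' : ℕ → ℤ) :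
    form n m μ (ν + ν') = form n m μ ν + form n m μ ν' := by
  simp only [form, Pi.add_apply, mul_add, sum_add_distrib]

lemma form_smul_left (n m : ℕ) (c : ℤ) (μ ν : ℕ → ℤ) :
    form n m (c • μ) ν = c * form n m μ ν := by
  simp only [form, mul_sum, Pi.smul_apply, smul_eq_mul]
  exact sum_congr rfl fun i _ => by ring

lemma form_smul_right (n m : ℕ) (c : ℤ) (μ ν : ℕ → ℤ) :
    form n m μ (c • ν) = c * form n m μ ν := by
  simp only [form, mul_sum, Pi.smul_apply, smul_eq_mul]
  exact sum_congr rfl fun i _ => by ring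

lemma twoRho_apply (n m : ℕ) {k : ℕ} (hk : k ∈ Icc 1 (n + m)) :
    twoRho n m k = ∑ j ∈ Ioc k (n + m), rootSign n k j - ∑ i ∈ Ico 1 k, rootSign n i k := by
  have hsplit : ∀ i j, (if i < j then rootSign n i j • (eps i - eps j) else 0) k
      = (if k = i then (if k < j then rootSign n k j else 0) else 0)
        - (if k = j then (if i < k then rootSign n i k else 0) else 0) := by
    intro i j
    unfold eps
    split_ifs <;> simp_all <;> omega
  have hup : (Icc 1 (n + m)).filter (k < ·) = Ioc k (n + m) := by ext; simp; omega
  have hdown : (Icc 1 (n + m)).filter (· < k) = Ico 1 k := by ext; simp at hk ⊢; omega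
  simp only [twoRho, Finset.sum_apply, hsplit, sum_sub_distrib]
  rw [sum_comm (t := Icc 1 (n + m)) (f := fun i j => if k = j then _ else _)]
  simp only [sum_ite_irrel, sum_const_zero, sum_ite_eq, if_pos hk,
    ← sum_filter, hup, hdown]

lemma twoRho_apply_of_le (n m : ℕ) {k : ℕ} (hk₁ : 1 ≤ k) (hk : k ≤ n) :
    twoRho n m k = n - m + 1 - 2 * k := by
  have hup : ∑ j ∈ Ioc k (n + m), rootSign n k j = (n - k : ℕ) - m := by
    rw [← sum_Ioc_consecutive _ hk (Nat.le_add_right n m),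
      sum_eq_card_nsmul (b := 1), sum_eq_card_nsmul (b := -1)]
    · simp; omega
    all_goals intro x hx; simp only [mem_Ioc, rootSign, eq_iff_iff] at hx ⊢; split_ifs <;> omega
  have hdown : ∑ i ∈ Ico 1 k, rootSign n i k = (k - 1 : ℕ) := by
    rw [sum_eq_card_nsmul (b := 1)]
    · simp
    intro x hx; simp only [mem_Ico, rootSign, eq_iff_iff] at hx ⊢; split_ifs <;> omega
  rw [twoRho_apply n m (by simp; omega), hup, hdown]
  omega

lemma twoRho_apply_add (n m : ℕ) {j : ℕ} (hj₁ : 1 ≤ j) (hj : j ≤ m) :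
    twoRho n m (n + j) = n + m + 1 - 2 * j := by
  have hup : ∑ i ∈ Ioc (n + j) (n + m), rootSign n (n + j) i = (m - j : ℕ) := by
    rw [sum_eq_card_nsmul (b := 1)]
    · simp; omega
    intro x hx; simp only [mem_Ioc, rootSign, eq_iff_iff] at hx ⊢; split_ifs <;> omega
  have hdown : ∑ i ∈ Ico 1 (n + j), rootSign n i (n + j) = (j - 1 : ℕ) - n := by
    rw [← sum_Ico_consecutive _ (by omega : 1 ≤ n + 1) (by omega : n + 1 ≤ n + j),
      sum_eq_card_nsmul (b := -1), sum_eq_card_nsmul (b := 1)]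
    · simp; omega
    all_goals intro x hx; simp only [mem_Ico, rootSign, eq_iff_iff] at hx ⊢; split_ifs <;> omega
  rw [twoRho_apply n m (by simp; omega), hup, hdown]
  omega

lemma form_eq_sum_sub_sum (n m : ℕ) (μ ν : ℕ → ℤ) :
    form n m μ ν = ∑ i ∈ Icc 1 n, μ i * ν i - ∑ j ∈ Icc 1 m, μ (n + j) * ν (n + j) := by
  have hIcc : ∀ N, Icc 1 N = Ioc 0 N := fun N => by ext; simp; omega
  have hshift : Ioc n (n + m) = (Ioc 0 m).map (addLeftEmbedding n) := by simp
  rw [form, hIcc, ← sum_Ioc_consecutive _ (Nat.zero_le n) (Nat.le_add_right n m), hshift,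
    sum_map, hIcc, hIcc, sub_eq_add_neg, ← sum_neg_distrib]
  congr 1 <;> refine sum_congr rfl fun i hi => ?_ <;> simp only [mem_Ioc] at hi
  · simp [hi.2]
  · simp [hi.1.ne']

lemma form_phi_left (n m : ℕ) (ν : ℕ → ℤ) : form n m (phi n) ν = ∑ i ∈ Icc 1 n, ν i := by
  rw [form_eq_sum_sub_sum, sum_eq_zero (s := Icc 1 m) fun j hj => by simp at hj; simp [phi]; omega,
    sub_zero]
  exact sum_congr rfl fun i hi => by simp only [mem_Icc] at hi; simp [phi, hi]

lemma form_psi_left (n m : ℕ) {s : ℕ} (hs : s ≤ m) (ν : ℕ → ℤ) :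
    form n m (psi n s) ν = -∑ j ∈ Icc 1 s, ν (n + j) := by
  have hpsi : ∀ j ∈ Icc 1 m, psi n s (n + j) * ν (n + j) = if j ≤ s then ν (n + j) else 0 := by
    intro j hj
    simp only [mem_Icc] at hj
    simp [psi, hj.1]
  rw [form_eq_sum_sub_sum, sum_congr rfl hpsi, ← sum_filter, sum_eq_zero, zero_sub]
  · congr 2; ext; simp; omega
  · intro i hi; simp only [mem_Icc] at hi; simp [psi]; omega

lemma form_phi_phi (n m : ℕ) : form n m (phi n) (phi n) = n := by
  rw [form_phi_left, sum_eq_card_nsmul (b := 1) fun i hi => by simp at hi; simp [phi, hi]]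
  simp

lemma form_phi_psi (n m s : ℕ) : form n m (phi n) (psi n s) = 0 := by
  rw [form_phi_left]
  exact sum_eq_zero fun i hi => by simp at hi; simp [psi]; omega

lemma form_psi_phi (n m s : ℕ) : form n m (psi n s) (phi n) = 0 := by
  rw [form_eq_sum_sub_sum, sum_eq_zero fun i hi => by simp at hi; simp [psi]; omega,
    sum_eq_zero fun j hj => by simp at hj; simp [phi]; omega, sub_zero]

lemma form_psi_psi (n m : ℕ) {s : ℕ} (hs : s ≤ m) (t : ℕ) :
    form n m (psi n s) (psi n t) = -(min s t : ℕ) := by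
  have hfilter : (Icc 1 s).filter (· ≤ t) = Icc 1 (min s t) := by ext; simp; omega
  have hpsi : ∀ j ∈ Icc 1 s, psi n t (n + j) = if j ≤ t then 1 else 0 := by
    intro j hj
    simp only [mem_Icc] at hj
    simp [psi, hj.1]
  rw [form_psi_left n m hs, sum_congr rfl hpsi, ← sum_filter, hfilter]
  simp

lemma sum_Icc_one_id_mul_two (N : ℕ) : (∑ i ∈ Icc 1 N, (i : ℤ)) * 2 = N * (N + 1) := by
  induction N with
  | zero => simp
  | succ N ih => rw [sum_Icc_succ_top (by omega), add_mul, ih]; push_cast; ring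

lemma form_phi_twoRho (n m : ℕ) : form n m (phi n) (twoRho n m) = -(n * m) := by
  calc form n m (phi n) (twoRho n m)
      = ∑ i ∈ Icc 1 n, ((n - m + 1 : ℤ) - i * 2) := by
        rw [form_phi_left]
        exact sum_congr rfl fun i hi => by
          simp only [mem_Icc] at hi; rw [twoRho_apply_of_le n m hi.1 hi.2]; ring
    _ = n * (n - m + 1) - (∑ i ∈ Icc 1 n, (i : ℤ)) * 2 := by
        rw [sum_sub_distrib, ← sum_mul]; simp
    _ = -(n * m) := by rw [sum_Icc_one_id_mul_two]; ring

lemma form_psi_twoRho (n m : ℕ) {s : ℕ} (hs : s ≤ m) :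
    form n m (psi n s) (twoRho n m) = -(s * (n + m - s)) := by
  calc form n m (psi n s) (twoRho n m)
      = -∑ j ∈ Icc 1 s, ((n + m + 1 : ℤ) - j * 2) := by
        rw [form_psi_left n m hs]
        exact congrArg _ <| sum_congr rfl fun j hj => by
          simp only [mem_Icc] at hj; rw [twoRho_apply_add n m hj.1 (hj.2.trans hs)]; ring
    _ = -(s * (n + m + 1) - (∑ j ∈ Icc 1 s, (j : ℤ)) * 2) := by
        rw [sum_sub_distrib, ← sum_mul]; simp
    _ = -(s * (n + m - s)) := by rw [sum_Icc_one_id_mul_two]; ring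

theorem form_kappa_difference_case1_general (n m a b p q : ℕ) (hba : b ≤ a) (ham : a ≤ m)
    (α β δ : ℕ → ℤ)
    (hα : α = (a : ℤ) • phi n + ((p : ℤ) - (n : ℤ)) • psi n a)
    (hβ : β = (b : ℤ) • phi n + ((q : ℤ) - (n : ℤ)) • psi n b)
    (hδ : δ = (a : ℤ) • phi n + ((p : ℤ) - (n : ℤ)) • psi n a + (q : ℤ) • psi n b) :
    form n m δ (δ + twoRho n m) - form n m α (α + twoRho n m)
      - form n m β (β + twoRho n m) = -2 * (b : ℤ) * p * q := by
  have hbm : b ≤ m := hba.trans ham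
  subst hα hβ hδ
  simp only [form_add_left, form_add_right, form_smul_left, form_smul_right, form_phi_phi,
    form_phi_psi, form_psi_phi, form_psi_psi n m ham,
    form_psi_psi n m hbm, form_phi_twoRho, form_psi_twoRho n m ham, form_psi_twoRho n m hbm,
    min_self, min_eq_left hba, min_eq_right hba]
  ring

/-- for positive integers `a, b, p, q` with `1 ≤ n < p`, `n ≤ q`,
`b ≤ a ≤ m`, and `α = a·φ_n + (p−n)·ψ_a`, `β = b·φ_n + (q−n)·ψ_b`,
`δ = a·φ_n + (p−n)·ψ_a + q·ψ_b`, one has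
`⟨δ, δ+2ρ⟩ − ⟨α, α+2ρ⟩ − ⟨β, β+2ρ⟩ = −2bpq`. -/
theorem form_kappa_difference_case1 (n m a b p q : ℕ) (hn : 1 ≤ n)
    (ha : 1 ≤ a) (hb : 1 ≤ b) (hp : 1 ≤ p) (hq : 1 ≤ q)
    (hnp : n < p) (hnq : n ≤ q) (hba : b ≤ a) (ham : a ≤ m)
    (α β δ : ℕ → ℤ)
    (hα : α = (a : ℤ) • phi n + ((p : ℤ) - (n : ℤ)) • psi n a)
    (hβ : β = (b : ℤ) • phi n + ((q : ℤ) - (n : ℤ)) • psi n b)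
    (hδ : δ = (a : ℤ) • phi n + ((p : ℤ) - (n : ℤ)) • psi n a + (q : ℤ) • psi n b) :
    form n m δ (δ + twoRho n m) - form n m α (α + twoRho n m)
      - form n m β (β + twoRho n m) = -2 * (b : ℤ) * p * q :=
  form_kappa_difference_case1_general n m a b p q hba ham α β δ hα hβ hδ

end TwoBoundary
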